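/- arXiv:2108.08680 — 8 statements merged into one kernel-verified Lean document; each statement's English description precedes it below -/
import Mathlib

section
/- Let V be a real vector space with a skew-symmetric bilinear form ω, and let u₁, u₂, v₁, v₂ ∈ V satisfy ω(u₁,u₂) = ω(v₁,v₂) = 0 and ω(u₁,v₂) ≠ 0. Then ω((1-t)u₁ + t·u₂, (1-s)v₁ + s·v₂) ≠ 0 for all t, s ∈ (0,1) if and only if the four values ω(u₁,v₁), ω(u₁,v₂), ω(u₂,v₁), ω(u₂,v₂) are all nonnegative or all nonpositive. -/
open Topology Filter

private lemma key_real (a b c d : ℝ) (hb : b ≠ 0) :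
    (∀ t s : ℝ, t ∈ Set.Ioo (0:ℝ) 1 → s ∈ Set.Ioo (0:ℝ) 1 →
      (1-t)*(1-s)*a + (1-t)*s*b + t*(1-s)*c + t*s*d ≠ 0) ↔
    ((0 ≤ a ∧ 0 ≤ b ∧ 0 ≤ c ∧ 0 ≤ d) ∨ (a ≤ 0 ∧ b ≤ 0 ∧ c ≤ 0 ∧ d ≤ 0)) := by
  set F : ℝ × ℝ → ℝ := fun p => (1-p.1)*(1-p.2)*a + (1-p.1)*p.2*b + p.1*(1-p.2)*c + p.1*p.2*d
    with hF
  have hFc : Continuous F := by fun_prop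
  set S : Set (ℝ × ℝ) := Set.Ioo (0:ℝ) 1 ×ˢ Set.Ioo (0:ℝ) 1 with hSdef
  have hScl : ∀ p : ℝ × ℝ, p.1 ∈ Set.Icc (0:ℝ) 1 → p.2 ∈ Set.Icc (0:ℝ) 1 → p ∈ closure S := by
    intro p h1 h2
    rw [hSdef, closure_prod_eq, closure_Ioo (by norm_num : (0:ℝ) ≠ 1)]
    exact ⟨h1, h2⟩
  have hnear : ∀ (p : ℝ × ℝ), p ∈ closure S → ∀ (G : ℝ × ℝ → ℝ), Continuous G →
      0 < G p → ∃ x ∈ S, 0 < G x := by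
    intro p hp G hG hGp
    have hNB : (𝓝[S] p).NeBot := mem_closure_iff_nhdsWithin_neBot.mp hp
    have hop : {x | 0 < G x} ∈ 𝓝 p := (isOpen_lt continuous_const hG).mem_nhds hGp
    have h1 : {x | 0 < G x} ∈ 𝓝[S] p := mem_nhdsWithin_of_mem_nhds hop
    obtain ⟨x, hx1, hx2⟩ := (Filter.eventually_iff.mpr h1).and self_mem_nhdsWithin |>.exists
    exact ⟨x, hx2, hx1⟩
  constructor
  · intro h
    by_contra hc
    rw [not_or] at hc
    obtain ⟨hL, hR⟩ := hc
    have negex : a < 0 ∨ b < 0 ∨ c < 0 ∨ d < 0 := by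
      by_contra hcc; push_neg at hcc
      exact hL ⟨hcc.1, hcc.2.1, hcc.2.2.1, hcc.2.2.2⟩
    have posex : 0 < a ∨ 0 < b ∨ 0 < c ∨ 0 < d := by
      by_contra hcc; push_neg at hcc
      exact hR ⟨hcc.1, hcc.2.1, hcc.2.2.1, hcc.2.2.2⟩
    have hFa : F (0,0) = a := by simp [hF]
    have hFb : F (0,1) = b := by simp [hF]
    have hFcc : F (1,0) = c := by simp [hF]
    have hFd : F (1,1) = d := by simp [hF]
    have hxneg : ∃ x ∈ S, F x < 0 := by
      have aux : ∀ p : ℝ × ℝ, p ∈ closure S → F p < 0 → ∃ x ∈ S, F x < 0 := by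
        intro p hp hFp
        obtain ⟨x, hxS, hx⟩ := hnear p hp (fun z => -F z) (hFc.neg) (by simpa using hFp)
        exact ⟨x, hxS, by linarith [hx]⟩
      rcases negex with hn | hn | hn | hn
      · exact aux (0,0) (hScl _ (by norm_num) (by norm_num)) (by rw [hFa]; exact hn)
      · exact aux (0,1) (hScl _ (by norm_num) (by norm_num)) (by rw [hFb]; exact hn)
      · exact aux (1,0) (hScl _ (by norm_num) (by norm_num)) (by rw [hFcc]; exact hn)
      · exact aux (1,1) (hScl _ (by norm_num) (by norm_num)) (by rw [hFd]; exact hn)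
    have hxpos : ∃ x ∈ S, 0 < F x := by
      rcases posex with hn | hn | hn | hn
      · exact hnear (0,0) (hScl _ (by norm_num) (by norm_num)) F hFc (by rw [hFa]; exact hn)
      · exact hnear (0,1) (hScl _ (by norm_num) (by norm_num)) F hFc (by rw [hFb]; exact hn)
      · exact hnear (1,0) (hScl _ (by norm_num) (by norm_num)) F hFc (by rw [hFcc]; exact hn)
      · exact hnear (1,1) (hScl _ (by norm_num) (by norm_num)) F hFc (by rw [hFd]; exact hn)
    obtain ⟨x, hxS, hxlt⟩ := hxneg
    obtain ⟨y, hyS, hylt⟩ := hxpos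
    set g : ℝ → ℝ := fun r => F ((1-r) • x + r • y) with hg
    have hgc : Continuous g := by
      apply hFc.comp
      exact ((continuous_const.sub continuous_id).smul continuous_const).add
        (continuous_id.smul continuous_const)
    have hg0 : g 0 = F x := by simp [hg]
    have hg1 : g 1 = F y := by simp [hg]
    have : (0:ℝ) ∈ Set.Icc (g 0) (g 1) := by rw [hg0, hg1]; exact ⟨le_of_lt hxlt, le_of_lt hylt⟩
    obtain ⟨r, hr, hgr⟩ := intermediate_value_Icc (by norm_num : (0:ℝ) ≤ 1)
      hgc.continuousOn this
    have hSconv : Convex ℝ S := (convex_Ioo (0:ℝ) 1).prod (convex_Ioo (0:ℝ) 1)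
    have hzS : (1-r) • x + r • y ∈ S :=
      hSconv hxS hyS (by linarith [hr.2]) hr.1 (by ring)
    obtain ⟨hz1, hz2⟩ := hzS
    exact h _ _ hz1 hz2 hgr
  · rintro (⟨ha, hbb, hc, hd⟩ | ⟨ha, hbb, hc, hd⟩) t s ht hs
    · have hbpos : 0 < b := lt_of_le_of_ne hbb (Ne.symm hb)
      have h1 : 0 < (1-t)*s*b := by
        apply mul_pos (mul_pos (by linarith [ht.2]) hs.1) hbpos
      have h2 : 0 ≤ (1-t)*(1-s)*a := by
        apply mul_nonneg (mul_nonneg (by linarith [ht.2]) (by linarith [hs.2])) ha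
      have h3 : 0 ≤ t*(1-s)*c := by
        apply mul_nonneg (mul_nonneg (le_of_lt ht.1) (by linarith [hs.2])) hc
      have h4 : 0 ≤ t*s*d := mul_nonneg (mul_nonneg (le_of_lt ht.1) (le_of_lt hs.1)) hd
      intro habs
      linarith
    · have hbneg : b < 0 := lt_of_le_of_ne hbb hb
      have h1 : (1-t)*s*b < 0 := by
        apply mul_neg_of_pos_of_neg (mul_pos (by linarith [ht.2]) hs.1) hbneg
      have h2 : (1-t)*(1-s)*a ≤ 0 := by
        apply mul_nonpos_of_nonneg_of_nonpos
          (mul_nonneg (by linarith [ht.2]) (by linarith [hs.2])) ha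
      have h3 : t*(1-s)*c ≤ 0 := by
        apply mul_nonpos_of_nonneg_of_nonpos
          (mul_nonneg (le_of_lt ht.1) (by linarith [hs.2])) hc
      have h4 : t*s*d ≤ 0 := mul_nonpos_of_nonneg_of_nonpos
          (mul_nonneg (le_of_lt ht.1) (le_of_lt hs.1)) hd
      intro habs
      linarith

/-- segment-pair incidence lemma. -/
theorem stmt0 (V : Type*) [AddCommGroup V] [Module ℝ V]
    (ω : LinearMap.BilinForm ℝ V)
    (hskew : ∀ x y : V, ω x y = - ω y x)
    (u₁ u₂ v₁ v₂ : V)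
    (hu : ω u₁ u₂ = 0) (hv : ω v₁ v₂ = 0) (hne : ω u₁ v₂ ≠ 0) :
    (∀ t s : ℝ, t ∈ Set.Ioo (0:ℝ) 1 → s ∈ Set.Ioo (0:ℝ) 1 →
      ω ((1 - t) • u₁ + t • u₂) ((1 - s) • v₁ + s • v₂) ≠ 0) ↔
    ((0 ≤ ω u₁ v₁ ∧ 0 ≤ ω u₁ v₂ ∧ 0 ≤ ω u₂ v₁ ∧ 0 ≤ ω u₂ v₂) ∨
     (ω u₁ v₁ ≤ 0 ∧ ω u₁ v₂ ≤ 0 ∧ ω u₂ v₁ ≤ 0 ∧ ω u₂ v₂ ≤ 0)) := by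
  have hexp : ∀ t s : ℝ, ω ((1 - t) • u₁ + t • u₂) ((1 - s) • v₁ + s • v₂) =
      (1-t)*(1-s)*(ω u₁ v₁) + (1-t)*s*(ω u₁ v₂) + t*(1-s)*(ω u₂ v₁) + t*s*(ω u₂ v₂) := by
    intro t s
    simp only [map_add, map_smul, LinearMap.add_apply, LinearMap.smul_apply, smul_eq_mul]
    ring
  simp only [hexp]
  exact key_real _ _ _ _ hne
end

section
/- Let L₁, L₂, L₃ be pairwise transverse Lagrangians in a symplectic vector space (V, ω), and define b(u,v) = ω(u, σ_{L₁,L₃} v) for u, v ∈ L₂, where σ_{L₁,L₃} = I ⊕ -I with respect to V = L₁ ⊕ L₃. Then b is a symmetric nondegenerate bilinear form on L₂. -/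
/-!
Decompose `x = x₁ + x₃` along `V = L₁ ⊕ L₃`, so that `σ x = x₁ - x₃`. Since `L₁` and `L₃` are
isotropic, `ω x (σ y) = ω x₃ y₁ - ω x₁ y₃`, which is symmetric in `x, y` because `ω` is
alternating; this holds on all of `V`. If `u ∈ L₂` is in the kernel of `b`, symmetry gives
`ω v (σ u) = 0` for all `v ∈ L₂`, so `σ u ∈ L₂^ω = L₂`. Then `u + σ u = 2 u₁ ∈ L₁ ∩ L₂` and
`u - σ u = 2 u₃ ∈ L₂ ∩ L₃`, both zero, so `u = 0`.
-/

section CommRing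

variable {R V : Type*} [CommRing R] [AddCommGroup V] [Module R V]

theorem exists_eq_add_and_apply_eq_sub {L₁ L₃ : Submodule R V} (hsup : L₁ ⊔ L₃ = ⊤)
    {σ : V →ₗ[R] V} (hσ₁ : ∀ x ∈ L₁, σ x = x) (hσ₃ : ∀ x ∈ L₃, σ x = -x) (x : V) :
    ∃ x₁ ∈ L₁, ∃ x₃ ∈ L₃, x = x₁ + x₃ ∧ σ x = x₁ - x₃ := by
  obtain ⟨x₁, hx₁, x₃, hx₃, rfl⟩ := Submodule.mem_sup.1 (hsup ▸ Submodule.mem_top : x ∈ L₁ ⊔ L₃)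
  exact ⟨x₁, hx₁, x₃, hx₃, rfl, by rw [map_add, hσ₁ x₁ hx₁, hσ₃ x₃ hx₃, sub_eq_add_neg]⟩

namespace LinearMap.BilinForm

theorem apply_eq_zero_of_le_orthogonal {B : LinearMap.BilinForm R V} {L : Submodule R V}
    (hL : L ≤ B.orthogonal L) {x y : V} (hx : x ∈ L) (hy : y ∈ L) : B x y = 0 :=
  hL hy x hx

theorem apply_reflection_comm {B : LinearMap.BilinForm R V} (hB : B.IsAlt) {L₁ L₃ : Submodule R V}
    (h₁ : L₁ ≤ B.orthogonal L₁) (h₃ : L₃ ≤ B.orthogonal L₃) (hsup : L₁ ⊔ L₃ = ⊤)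
    {σ : V →ₗ[R] V} (hσ₁ : ∀ x ∈ L₁, σ x = x) (hσ₃ : ∀ x ∈ L₃, σ x = -x) (x y : V) :
    B x (σ y) = B y (σ x) := by
  obtain ⟨x₁, hx₁, x₃, hx₃, rfl, hσx⟩ := exists_eq_add_and_apply_eq_sub hsup hσ₁ hσ₃ x
  obtain ⟨y₁, hy₁, y₃, hy₃, rfl, hσy⟩ := exists_eq_add_and_apply_eq_sub hsup hσ₁ hσ₃ y
  rw [hσx, hσy]
  simp only [map_add, map_sub, LinearMap.add_apply,
    apply_eq_zero_of_le_orthogonal h₁ hx₁ hy₁, apply_eq_zero_of_le_orthogonal h₁ hy₁ hx₁,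
    apply_eq_zero_of_le_orthogonal h₃ hx₃ hy₃, apply_eq_zero_of_le_orthogonal h₃ hy₃ hx₃,
    ← hB.neg_eq y₁ x₃, ← hB.neg_eq y₃ x₁]
  ring

end LinearMap.BilinForm

end CommRing

section Field

variable {K V : Type*} [Field K] [NeZero (2 : K)] [AddCommGroup V] [Module K V]

theorem eq_zero_of_mem_of_reflection_mem {L₁ L₂ L₃ : Submodule K V} (hsup : L₁ ⊔ L₃ = ⊤)
    (h12 : L₁ ⊓ L₂ = ⊥) (h23 : L₂ ⊓ L₃ = ⊥)
    {σ : V →ₗ[K] V} (hσ₁ : ∀ x ∈ L₁, σ x = x) (hσ₃ : ∀ x ∈ L₃, σ x = -x)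
    {u : V} (hu : u ∈ L₂) (hσu : σ u ∈ L₂) : u = 0 := by
  obtain ⟨u₁, hu₁, u₃, hu₃, rfl, hσ⟩ := exists_eq_add_and_apply_eq_sub hsup hσ₁ hσ₃ u
  have hsum : (2 : K) • u₁ ∈ L₁ ⊓ L₂ := by
    have h : (2 : K) • u₁ = u₁ + u₃ + σ (u₁ + u₃) := by rw [hσ, two_smul]; abel
    exact ⟨L₁.smul_mem 2 hu₁, h ▸ L₂.add_mem hu hσu⟩
  have hdiff : (2 : K) • u₃ ∈ L₂ ⊓ L₃ := by
    have h : (2 : K) • u₃ = u₁ + u₃ - σ (u₁ + u₃) := by rw [hσ, two_smul]; abel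
    exact ⟨h ▸ L₂.sub_mem hu hσu, L₃.smul_mem 2 hu₃⟩
  rw [h12, Submodule.mem_bot, smul_eq_zero] at hsum
  rw [h23, Submodule.mem_bot, smul_eq_zero] at hdiff
  rw [hsum.resolve_left two_ne_zero, hdiff.resolve_left two_ne_zero, add_zero]

end Field

theorem stmt8_general (V : Type*) [AddCommGroup V] [Module ℝ V]
    (ω : LinearMap.BilinForm ℝ V) (halt : ω.IsAlt)
    (L₁ L₂ L₃ : Submodule ℝ V)
    (hL₁ : ω.orthogonal L₁ = L₁) (hL₂ : ω.orthogonal L₂ = L₂) (hL₃ : ω.orthogonal L₃ = L₃)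
    (h12 : L₁ ⊓ L₂ = ⊥) (h23 : L₂ ⊓ L₃ = ⊥)
    (hcompl : IsCompl L₁ L₃)
    (σ : V →ₗ[ℝ] V) (hσ₁ : ∀ x ∈ L₁, σ x = x) (hσ₃ : ∀ x ∈ L₃, σ x = -x) :
    (∀ u ∈ L₂, ∀ v ∈ L₂, ω u (σ v) = ω v (σ u)) ∧
    (∀ u ∈ L₂, (∀ v ∈ L₂, ω u (σ v) = 0) → u = 0) := by
  have hsymm : ∀ u v, ω u (σ v) = ω v (σ u) :=
    LinearMap.BilinForm.apply_reflection_comm halt hL₁.ge hL₃.ge hcompl.sup_eq_top hσ₁ hσ₃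
  refine ⟨fun u _ v _ => hsymm u v, fun u hu hker => ?_⟩
  have hσu : σ u ∈ L₂ := hL₂ ▸ fun v hv => (hsymm v u).trans (hker v hv)
  exact eq_zero_of_mem_of_reflection_mem hcompl.sup_eq_top h12 h23 hσ₁ hσ₃ hu hσu

/-- the Maslov form b(u,v) = ω(u, σ_{L₁,L₃} v) is a symmetric
nondegenerate bilinear form on L₂, for pairwise transverse Lagrangians L₁, L₂, L₃. -/
theorem stmt8 (V : Type*) [AddCommGroup V] [Module ℝ V] [FiniteDimensional ℝ V]
    (ω : LinearMap.BilinForm ℝ V) (halt : ω.IsAlt) (hnd : ω.Nondegenerate)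
    (L₁ L₂ L₃ : Submodule ℝ V)
    (hL₁ : ω.orthogonal L₁ = L₁) (hL₂ : ω.orthogonal L₂ = L₂) (hL₃ : ω.orthogonal L₃ = L₃)
    (h12 : L₁ ⊓ L₂ = ⊥) (h23 : L₂ ⊓ L₃ = ⊥) (h13 : L₁ ⊓ L₃ = ⊥)
    (hcompl : IsCompl L₁ L₃)
    (σ : V →ₗ[ℝ] V) (hσ₁ : ∀ x ∈ L₁, σ x = x) (hσ₃ : ∀ x ∈ L₃, σ x = -x) :
    (∀ u ∈ L₂, ∀ v ∈ L₂, ω u (σ v) = ω v (σ u)) ∧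
    (∀ u ∈ L₂, (∀ v ∈ L₂, ω u (σ v) = 0) → u = 0) :=
  stmt8_general V ω halt L₁ L₂ L₃ hL₁ hL₂ hL₃ h12 h23 hcompl σ hσ₁ hσ₃
end

section
/- The set U₊^{>0} of upper unitriangular 4×4 matrices of the form [[1,a,b,c],[0,1,d,ad-b],[0,0,1,a],[0,0,0,1]] with a>0, b>0, c>0, ad-b>0, and -b² + abd - cd > 0 is closed under matrix multiplication (it is a subsemigroup of the unipotent group U₊). -/
/-- The positive semigroup U₊^{>0} of totally positive upper unitriangular matrices
in Sp(4,ℝ). -/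
def Uplus : Set (Matrix (Fin 4) (Fin 4) ℝ) :=
  { M | ∃ a b c d : ℝ,
      M = !![1, a, b, c; 0, 1, d, a*d - b; 0, 0, 1, a; 0, 0, 0, 1] ∧
      0 < a ∧ 0 < b ∧ 0 < c ∧ 0 < a*d - b ∧ 0 < -b^2 + a*b*d - c*d }

/-- U₊^{>0} is closed under matrix multiplication. -/
theorem stmt13 (M N : Matrix (Fin 4) (Fin 4) ℝ) (hM : M ∈ Uplus) (hN : N ∈ Uplus) :
    M * N ∈ Uplus := by
  obtain ⟨a, b, c, d, hMeq, ha, hb, hc, hp, hq⟩ := hM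
  obtain ⟨a', b', c', d', hNeq, ha', hb', hc', hp', hq'⟩ := hN
  have hd : 0 < d := by nlinarith
  have hd' : 0 < d' := by nlinarith
  refine ⟨a + a', b + b' + a * d', c + c' + a * (a' * d' - b') + a' * b, d + d', ?_, ?_, ?_, ?_, ?_, ?_⟩
  · subst hMeq hNeq
    ext i j
    fin_cases i <;> fin_cases j <;>
      simp [Matrix.mul_apply, Fin.sum_univ_four, Matrix.vecHead, Matrix.vecTail] <;> ring
  · linarith
  · nlinarith
  · nlinarith
  · nlinarith
  · set A := a + a'
    set B := b + b' + a * d'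
    set C := c + c' + a * (a' * d' - b') + a' * b
    set D := d + d'
    have key : (-B^2 + A*B*D - C*D) * (d * d') =
        (-b^2 + a*b*d - c*d) * d' * (d + d')
        + (-b'^2 + a'*b'*d' - c'*d') * d * (d + d')
        + (d' * (a*d - b) + b' * d)^2 := by
      simp only [A, B, C, D]; ring
    nlinarith [mul_pos hd hd', sq_nonneg (d' * (a*d - b) + b' * d),
      mul_pos (mul_pos hq hd') (add_pos hd hd'),
      mul_pos (mul_pos hq' hd) (add_pos hd hd')]
end

section
/- Let K = diag(1,-1,1,-1). Then the inverse of any element of the positive semigroup U₋^{>0} equals K u K for some u ∈ U₋^{>0}; that is, (U₋^{>0})^{-1} = K U₋^{>0} K. -/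
/-- The positive semigroup U₋^{>0} of totally positive lower unitriangular matrices
in Sp(4,ℝ). -/
def Uminus : Set (Matrix (Fin 4) (Fin 4) ℝ) :=
  { M | ∃ a b c d : ℝ,
      M = !![1, 0, 0, 0; a, 1, 0, 0; b, d, 1, 0; c, a*d - b, a, 1] ∧
      0 < a ∧ 0 < b ∧ 0 < c ∧ 0 < a*d - b ∧ 0 < -b^2 + a*b*d - c*d }

noncomputable def Kmat : Matrix (Fin 4) (Fin 4) ℝ := Matrix.diagonal ![1, -1, 1, -1]

lemma key (a b c d : ℝ) :
    (!![1, 0, 0, 0; a, 1, 0, 0; b, d, 1, 0; c, a*d - b, a, 1] :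
      Matrix (Fin 4) (Fin 4) ℝ)⁻¹ =
    Kmat * !![1, 0, 0, 0; a, 1, 0, 0; a*d - b, d, 1, 0; c, a*d - (a*d - b), a, 1] * Kmat := by
  apply Matrix.inv_eq_right_inv
  ext i j
  fin_cases i <;> fin_cases j <;>
    simp [Kmat, Matrix.mul_apply, Fin.sum_univ_four, Matrix.diagonal, Matrix.one_apply] <;> ring

/-- (U₋^{>0})⁻¹ = K U₋^{>0} K. -/
theorem stmt14 : (fun M : Matrix (Fin 4) (Fin 4) ℝ => M⁻¹) '' Uminus =
    (fun u : Matrix (Fin 4) (Fin 4) ℝ => Kmat * u * Kmat) '' Uminus := by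
  ext M
  constructor
  · rintro ⟨N, ⟨a, b, c, d, rfl, h1, h2, h3, h4, h5⟩, rfl⟩
    refine ⟨!![1, 0, 0, 0; a, 1, 0, 0; a*d - b, d, 1, 0; c, a*d - (a*d - b), a, 1],
      ⟨a, a*d - b, c, d, by ring_nf, h1, h4, h3, by linarith, by nlinarith⟩, (key a b c d).symm⟩
  · rintro ⟨u, ⟨a, b, c, d, rfl, h1, h2, h3, h4, h5⟩, rfl⟩
    refine ⟨!![1, 0, 0, 0; a, 1, 0, 0; a*d - b, d, 1, 0; c, a*d - (a*d - b), a, 1],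
      ⟨a, a*d - b, c, d, by ring_nf, h1, h4, h3, by linarith, by nlinarith⟩, ?_⟩
    simp only
    rw [key]
    norm_num
end

section
/- Let F₁ be the standard oriented isotropic flag (span of e₁ inside span of e₁,e₂), F₃ the opposite flag represented by columns (−e₄ direction) as the matrix with columns (0,0,0,1) and (0,0,-1,0), and F₂ = u·F₁ where u = [[1,0,0,0],[a,1,0,0],[b,d,1,0],[c,ad-b,a,1]] ∈ U₋^{>0}. Then the Maslov bilinear form of the three Lagrangians F₁⁽²⁾, F₂⁽²⁾, F₃⁽²⁾ is 2·[[ab-c, b],[b, d]], and this matrix is positive definite; hence the Maslov index of the triple is +1. -/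
/-!
The hypotheses on `σ` force `σ = diag(1, 1, -1, -1)`, so the four entries of the Maslov form are
polynomial identities. Positive definiteness is the `2 × 2` Sylvester criterion: the entry `2d`
is positive because `ad > b > 0` and `a > 0`, and the determinant is `4 (b (ad - b) - cd) > 0`.
-/

open Matrix

noncomputable def OmegaMat : Matrix (Fin 4) (Fin 4) ℝ :=
  !![0,0,0,1; 0,0,-1,0; 0,1,0,0; -1,0,0,0]

noncomputable def omegaForm (u v : Fin 4 → ℝ) : ℝ := u ⬝ᵥ (OmegaMat.mulVec v)

theorem posDef_of_fin_two {R : Type*} [CommRing R] [LinearOrder R] [IsStrictOrderedRing R]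
    [StarRing R] [TrivialStar R] {p q r : R} (hr : 0 < r) (hdet : 0 < p * r - q ^ 2) :
    (!![p, q; q, r]).PosDef := by
  refine .of_dotProduct_mulVec_pos ?_ fun v hv ↦ ?_
  · ext i j
    fin_cases i <;> fin_cases j <;> simp
  have hquad : r * (star v ⬝ᵥ (!![p, q; q, r] *ᵥ v))
      = (q * v 0 + r * v 1) ^ 2 + (p * r - q ^ 2) * v 0 ^ 2 := by
    simp only [dotProduct, Pi.star_apply, star_trivial, cons_mulVec, Fin.sum_univ_two,
      cons_val_zero, cons_val_one, cons_val_fin_one, empty_mulVec]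
    ring
  refine pos_of_mul_pos_right (hquad ▸ ?_) hr.le
  rcases eq_or_ne (v 0) 0 with h0 | h0
  · have h1 : v 1 ≠ 0 := fun h1 ↦ hv (funext fun i ↦ by fin_cases i <;> simp [h0, h1])
    simpa [h0] using sq_pos_of_ne_zero (mul_ne_zero hr.ne' h1)
  · exact add_pos_of_nonneg_of_pos (sq_nonneg _) (mul_pos hdet (sq_pos_of_ne_zero h0))

theorem omegaForm_vec4 (x₀ x₁ x₂ x₃ y₀ y₁ y₂ y₃ : ℝ) :
    omegaForm ![x₀, x₁, x₂, x₃] ![y₀, y₁, y₂, y₃] = x₀ * y₃ - x₁ * y₂ + x₂ * y₁ - x₃ * y₀ := by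
  simp only [omegaForm, dotProduct, mulVec, OmegaMat, of_apply, cons_val', cons_val_fin_one,
    Fin.sum_univ_four, cons_val_zero, cons_val_one, cons_val]
  ring

theorem apply_vec4_of_eqOn_spans (σ : (Fin 4 → ℝ) →ₗ[ℝ] (Fin 4 → ℝ))
    (hσ₁ : ∀ u ∈ Submodule.span ℝ {(![1,0,0,0] : Fin 4 → ℝ), ![0,1,0,0]}, σ u = u)
    (hσ₃ : ∀ u ∈ Submodule.span ℝ {(![0,0,1,0] : Fin 4 → ℝ), ![0,0,0,1]}, σ u = -u)
    (x y z w : ℝ) : σ ![x, y, z, w] = ![x, y, -z, -w] := by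
  have hsplit : (![x, y, z, w] : Fin 4 → ℝ)
      = (x • ![1,0,0,0] + y • ![0,1,0,0]) + (z • ![0,0,1,0] + w • ![0,0,0,1]) := by
    funext i; fin_cases i <;> simp
  rw [hsplit, map_add, hσ₁ _ (Submodule.mem_span_pair.2 ⟨x, y, rfl⟩),
    hσ₃ _ (Submodule.mem_span_pair.2 ⟨z, w, rfl⟩)]
  funext i; fin_cases i <;> simp

theorem stmt15_general (a b c d : ℝ)
    (ha : 0 < a) (hb : 0 < b) (had : 0 < a*d - b)
    (hdet : 0 < b*(a*d - b) - c*d)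
    (σ : (Fin 4 → ℝ) →ₗ[ℝ] (Fin 4 → ℝ))
    (hσ₁ : ∀ u ∈ Submodule.span ℝ {(![1,0,0,0] : Fin 4 → ℝ), ![0,1,0,0]}, σ u = u)
    (hσ₃ : ∀ u ∈ Submodule.span ℝ {(![0,0,1,0] : Fin 4 → ℝ), ![0,0,0,1]}, σ u = -u) :
    (omegaForm ![1,a,b,c] (σ ![1,a,b,c]) = 2*(a*b - c) ∧
     omegaForm ![1,a,b,c] (σ ![0,1,d,a*d - b]) = 2*b ∧
     omegaForm ![0,1,d,a*d - b] (σ ![1,a,b,c]) = 2*b ∧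
     omegaForm ![0,1,d,a*d - b] (σ ![0,1,d,a*d - b]) = 2*d) ∧
    (!![2*(a*b - c), 2*b; 2*b, 2*d]).PosDef := by
  refine ⟨?_, posDef_of_fin_two ?_ ?_⟩
  · simp only [apply_vec4_of_eqOn_spans σ hσ₁ hσ₃, omegaForm_vec4]
    refine ⟨?_, ?_, ?_, ?_⟩ <;> ring
  · have hpos : 0 < a * d := by linarith
    linarith [pos_of_mul_pos_right hpos ha.le]
  · linear_combination 4 * hdet

/-- for u ∈ U₋^{>0}, the Maslov form of (F₁⁽²⁾, F₂⁽²⁾, F₃⁽²⁾) in the basis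
w₁ = (1,a,b,c), w₂ = (0,1,d,ad−b) of F₂⁽²⁾ is 2·[[ab−c, b],[b, d]], which is positive
definite (hence Maslov index +1). Here σ = I on F₁⁽²⁾ = span{e₁,e₂} and σ = −I on
F₃⁽²⁾ = span{e₃,e₄}. -/
theorem stmt15 (a b c d : ℝ)
    (ha : 0 < a) (hb : 0 < b) (hc : 0 < c) (had : 0 < a*d - b)
    (hdet : 0 < b*(a*d - b) - c*d)
    (σ : (Fin 4 → ℝ) →ₗ[ℝ] (Fin 4 → ℝ))
    (hσ₁ : ∀ u ∈ Submodule.span ℝ {(![1,0,0,0] : Fin 4 → ℝ), ![0,1,0,0]}, σ u = u)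
    (hσ₃ : ∀ u ∈ Submodule.span ℝ {(![0,0,1,0] : Fin 4 → ℝ), ![0,0,0,1]}, σ u = -u) :
    (omegaForm ![1,a,b,c] (σ ![1,a,b,c]) = 2*(a*b - c) ∧
     omegaForm ![1,a,b,c] (σ ![0,1,d,a*d - b]) = 2*b ∧
     omegaForm ![0,1,d,a*d - b] (σ ![1,a,b,c]) = 2*b ∧
     omegaForm ![0,1,d,a*d - b] (σ ![0,1,d,a*d - b]) = 2*d) ∧
    (!![2*(a*b - c), 2*b; 2*b, 2*d]).PosDef :=
  stmt15_general a b c d ha hb had hdet σ hσ₁ hσ₃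
end

section
/- Suppose a, c, d, e, f ∈ ℝ satisfy: d > 0, a > 0, d + cf - ade > 0, a(d + cf - ade) - f > 0, (ac - 1)d > 0, and d(e - c)(a(d + cf − ade) − f) > 0. Then c > 0, e - c > 0, cf - ade > 0, and ad(d + cf - ade) - df > 0. -/
/-- the inequality manipulation in the proof that a positive-transverse
decreasing-curvature Legendrian polygon gives a positive triple of flags. -/
theorem stmt16 (a c d e f : ℝ)
    (hd : 0 < d) (ha : 0 < a)
    (h1 : 0 < d + c*f - a*d*e)
    (h2 : 0 < a*(d + c*f - a*d*e) - f)
    (h3 : 0 < (a*c - 1)*d)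
    (h4 : 0 < d*(e - c)*(a*(d + c*f - a*d*e) - f)) :
    0 < c ∧ 0 < e - c ∧ 0 < c*f - a*d*e ∧ 0 < a*d*(d + c*f - a*d*e) - d*f := by
  have hac : 0 < a*c - 1 := by
    rcases mul_pos_iff.mp h3 with ⟨h,_⟩|⟨_,h⟩
    exacts [h, absurd h (not_lt.mpr hd.le)]
  have hc : 0 < c := by nlinarith
  have hec : 0 < e - c := by
    have := mul_pos hd h2
    rcases (mul_pos_iff.mp h4) with ⟨h5, _⟩ | ⟨h5, h6⟩
    · nlinarith
    · nlinarith
  refine ⟨hc, hec, ?_, ?_⟩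
  · nlinarith [mul_pos ha hec, mul_pos hd hec, mul_pos hc hd, sq_nonneg (a*c-1),
      mul_pos hac hd, mul_pos (mul_pos ha hec) hd]
  · nlinarith [mul_pos hd h2]
end

section
/- Consider binary relation 'positive triple' on tuples of oriented isotropic flags satisfying: (1) if (F₁,F₂,F₃) is positive then (F₂,F₃,-F₁) is positive, and (3) if (F₁,F₂,F₃) and (F₁,F₂,F₄) are positive then (F₁,F₃,F₄) is positive. Then for any n-tuple (F₁,…,Fₙ): if (Fᵢ, Fᵢ₊₁, Fⱼ) is positive for every 1 ≤ i and i+1 < j ≤ n, then every triple (Fᵢ, Fⱼ, F_k) with 1 ≤ i < j < k ≤ n is positive. -/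
/-- abstract cyclic characterization of positivity. -/
theorem stmt18 {X : Type*} (neg : X → X) (P : X → X → X → Prop)
    (hinv : ∀ x, neg (neg x) = x)
    (hnegP : ∀ F₁ F₂ F₃, P (neg F₁) (neg F₂) (neg F₃) ↔ P F₁ F₂ F₃)
    (h1 : ∀ F₁ F₂ F₃, P F₁ F₂ F₃ → P F₂ F₃ (neg F₁))
    (h3 : ∀ F₁ F₂ F₃ F₄, P F₁ F₂ F₃ → P F₁ F₂ F₄ → P F₁ F₃ F₄)
    (n : ℕ) (F : ℕ → X)
    (hyp : ∀ i j : ℕ, 1 ≤ i → i + 1 < j → j ≤ n → P (F i) (F (i + 1)) (F j)) :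
    ∀ i j k : ℕ, 1 ≤ i → i < j → j < k → k ≤ n → P (F i) (F j) (F k) := by
  intro i j k hi hij hjk hkn
  induction j, hij using Nat.le_induction generalizing k with
  | base => exact hyp i k hi hjk hkn
  | succ j hj ih =>
    exact h3 _ _ _ _ (ih (j + 1) (Nat.lt_succ_self j) (le_trans (Nat.le_of_lt hjk) hkn))
      (ih k (Nat.lt_of_succ_lt hjk) hkn)
end

section
/- Let z : ℝ → ℂ be a C² arc-length-parametrized curve with unit tangent T(s) = z'(s), and let γ̂(s) = √(T(s)̄ ) · (1, z(s)) ∈ ℂ² (a contact lift, defined locally where a continuous square root of the conjugate tangent exists). Then ω_ℂ(γ̂(s), γ̂'(s)) = i for all s, where ω_ℂ is the standard complex symplectic form on ℂ² given by ω_ℂ((u₁,u₂),(v₁,v₂)) = -i(u₁v₂ - u₂v₁) up to the normalization with matrix [[0,-i],[i,0]]; in particular the real part ω = Re(ω_ℂ) satisfies ω(γ̂(s), γ̂'(s)) = 0, so γ̂ is Legendrian for ω. -/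
/-- The complex symplectic form on ℂ², with matrix [[0,-i],[i,0]] (under the convention
ω_ℂ(u,v) = vᵀ M u, i.e. ω_ℂ(u,v) = i(u₁v₂ - u₂v₁)). -/
noncomputable def omegaC (u v : ℂ × ℂ) : ℂ := Complex.I * (u.1 * v.2 - u.2 * v.1)

/-- The contact lift γ̂(s) = √(conj T(s)) · (1, z(s)) of the plane curve z. -/
noncomputable def gammaHat (z sq : ℝ → ℂ) (s : ℝ) : ℂ × ℂ := (sq s, sq s * z s)

/-!
Differentiating γ̂ = c · (1, z) gives γ̂' = c' · (1, z) + c · (0, z'). The first summand is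
parallel to γ̂, so it is killed by the alternating form ω_ℂ, leaving ω_ℂ(γ̂, γ̂') = i c² z'.
With c² = conj z' and |z'| = 1 this is i, whose real part vanishes.
-/

open Complex ComplexConjugate

theorem omegaC_pair_mul (c w c' w' : ℂ) :
    omegaC (c, c * w) (c', c' * w + c * w') = I * c ^ 2 * w' := by
  simp only [omegaC]
  ring

theorem hasDerivAt_gammaHat {z sq : ℝ → ℂ} {s : ℝ} {c' w' : ℂ}
    (hsq : HasDerivAt sq c' s) (hz : HasDerivAt z w' s) :
    HasDerivAt (gammaHat z sq) (c', c' * z s + sq s * w') s :=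
  hsq.prodMk (hsq.mul hz)

theorem omegaC_gammaHat_deriv {z sq : ℝ → ℂ} {s : ℝ}
    (hsq : DifferentiableAt ℝ sq s) (hz : DifferentiableAt ℝ z s) :
    omegaC (gammaHat z sq s) (deriv (gammaHat z sq) s) = I * sq s ^ 2 * deriv z s := by
  rw [(hasDerivAt_gammaHat hsq.hasDerivAt hz.hasDerivAt).deriv]
  exact omegaC_pair_mul _ _ _ _

theorem conj_mul_self_of_norm_eq_one {w : ℂ} (hw : ‖w‖ = 1) : conj w * w = 1 := by
  rw [conj_mul', hw]
  norm_num

theorem stmt19_general (z : ℝ → ℂ)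
    (hunit : ∀ s : ℝ, ‖deriv z s‖ = 1)
    (sq : ℝ → ℂ) (hsq : Differentiable ℝ sq)
    (hsqT : ∀ s : ℝ, (sq s)^2 = starRingEnd ℂ (deriv z s)) :
    ∀ s : ℝ, omegaC (gammaHat z sq s) (deriv (gammaHat z sq) s) = Complex.I ∧
      (omegaC (gammaHat z sq s) (deriv (gammaHat z sq) s)).re = 0 := by
  intro s
  -- `deriv z s` is junk `0` where `z` is not differentiable, so unit speed forces differentiability.
  have hz : DifferentiableAt ℝ z s :=
    differentiableAt_of_deriv_ne_zero (norm_ne_zero_iff.mp (by simp [hunit s]))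
  have hω : omegaC (gammaHat z sq s) (deriv (gammaHat z sq) s) = I := by
    rw [omegaC_gammaHat_deriv (hsq s) hz, mul_assoc, hsqT s,
      conj_mul_self_of_norm_eq_one (hunit s), mul_one]
  exact ⟨hω, by rw [hω, I_re]⟩

/-- for an arc-length parametrized C² plane curve z with contact lift
γ̂ = √(conj z') · (1, z), one has ω_ℂ(γ̂, γ̂') = i; in particular ω = Re(ω_ℂ) vanishes
on (γ̂, γ̂'), so γ̂ is Legendrian. -/
theorem stmt19 (z : ℝ → ℂ) (hz : ContDiff ℝ 2 z)
    (hunit : ∀ s : ℝ, ‖deriv z s‖ = 1)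
    (sq : ℝ → ℂ) (hsq : Differentiable ℝ sq)
    (hsqT : ∀ s : ℝ, (sq s)^2 = starRingEnd ℂ (deriv z s)) :
    ∀ s : ℝ, omegaC (gammaHat z sq s) (deriv (gammaHat z sq) s) = Complex.I ∧
      (omegaC (gammaHat z sq s) (deriv (gammaHat z sq) s)).re = 0 :=
  stmt19_general z hunit sq hsq hsqT
end
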